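/- arXiv:2010.00077 — 2 statements merged into one kernel-verified Lean document; each statement's English description precedes it below -/
import Mathlib

section
/- Let k ≥ 2 and n ≥ 1. The polynomial P(x_1,...,x_n) = x_1^{k-1}(x_1-1)^{k-1} · (x_1-1)···(x_n-1) has degree n + 2k - 2, has zeroes of multiplicity at least k at all points of {0,1}^n \ {(0,...,0)}, and has a zero of multiplicity exactly k-1 at the origin. -/
/-!
`P` has a zero of multiplicity at least `k` at `a` exactly when `P(x + a)` lies in the `k`-th
power of the ideal generated by the variables, so multiplicities add under products, and
multiplicity at least one means vanishing. Writing `P = F ^ (k - 1) * G` with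
`F = x₁ (x₁ - 1)` and `G = ∏ (xᵢ - 1)`, both `F` and `G` vanish on `{0,1}ⁿ \ {0}`, which
gives multiplicity `k` there. At the origin `P = x₁ ^ (k - 1) * Q` with `Q(0) ≠ 0`, so the
monomial `x₁ ^ (k - 1)` occurs in `P`. The degree count holds because `P` is a product of
`n + 2k - 2` linear factors over a domain.
-/

/-- `P` has a zero of multiplicity at least `k` at `a`: every monomial of `P(x + a)`
has total degree at least `k`. -/
def hasZeroOfMultAtLeast {n : ℕ} {R : Type*} [CommRing R]
    (P : MvPolynomial (Fin n) R) (a : Fin n → R) (k : ℕ) : Prop :=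
  ∀ d ∈ (MvPolynomial.bind₁ (fun i => MvPolynomial.X i + MvPolynomial.C (a i)) P).support,
    k ≤ ∑ i, d i

namespace MvPolynomial

variable {σ R : Type*} [CommRing R]

section TotalDegree

theorem totalDegree_X_sub_C [Nontrivial R] (i : σ) (r : R) :
    (X i - C r : MvPolynomial σ R).totalDegree = 1 := by
  rw [sub_eq_add_neg, ← map_neg, totalDegree_add_eq_left_of_totalDegree_lt] <;>
    simp [totalDegree_X]

theorem X_sub_C_ne_zero [Nontrivial R] (i : σ) (r : R) :
    (X i - C r : MvPolynomial σ R) ≠ 0 := by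
  intro h
  simpa [h] using totalDegree_X_sub_C i r

variable [IsDomain R]

theorem totalDegree_pow_of_isDomain (p : MvPolynomial σ R) (m : ℕ) :
    (p ^ m).totalDegree = m * p.totalDegree := by
  rcases eq_or_ne p 0 with rfl | hp
  · cases m <;> simp
  induction m with
  | zero => simp
  | succ m ih => rw [pow_succ, totalDegree_mul_of_isDomain (pow_ne_zero m hp) hp, ih, Nat.succ_mul]

theorem totalDegree_prod_of_isDomain {ι : Type*} (s : Finset ι) {f : ι → MvPolynomial σ R}
    (hf : ∀ i ∈ s, f i ≠ 0) :
    (∏ i ∈ s, f i).totalDegree = ∑ i ∈ s, (f i).totalDegree := by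
  classical
  induction s using Finset.induction_on with
  | empty => simp
  | insert j s hj ih =>
    have hs : ∀ i ∈ s, f i ≠ 0 := fun i hi => hf i (Finset.mem_insert_of_mem hi)
    rw [Finset.prod_insert hj, Finset.sum_insert hj, totalDegree_mul_of_isDomain
      (hf j (Finset.mem_insert_self j s)) (Finset.prod_ne_zero_iff.2 hs), ih hs]

end TotalDegree

theorem mem_idealOfVars_iff (p : MvPolynomial σ R) :
    p ∈ idealOfVars σ R ↔ constantCoeff p = 0 := by
  rw [← pow_one (idealOfVars σ R), mem_pow_idealOfVars_iff']
  simp [Finsupp.degree_eq_zero_iff, constantCoeff]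

theorem constantCoeff_bind₁_X_add_C (a : σ → R) (p : MvPolynomial σ R) :
    constantCoeff (bind₁ (fun i => X i + C (a i)) p) = eval a p := by
  induction p using MvPolynomial.induction_on <;> simp_all

end MvPolynomial

open MvPolynomial

section Multiplicity

variable {n : ℕ} {R : Type*} [CommRing R] {P Q : MvPolynomial (Fin n) R} {a : Fin n → R}
  {k l : ℕ}

theorem hasZeroOfMultAtLeast_iff : hasZeroOfMultAtLeast P a k ↔
    bind₁ (fun i => X i + C (a i)) P ∈ idealOfVars (Fin n) R ^ k := by
  simp [hasZeroOfMultAtLeast, mem_pow_idealOfVars_iff, Finsupp.degree_eq_sum]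

theorem hasZeroOfMultAtLeast_one_iff : hasZeroOfMultAtLeast P a 1 ↔ eval a P = 0 := by
  rw [hasZeroOfMultAtLeast_iff, pow_one, mem_idealOfVars_iff, constantCoeff_bind₁_X_add_C]

theorem hasZeroOfMultAtLeast.mul (hP : hasZeroOfMultAtLeast P a k)
    (hQ : hasZeroOfMultAtLeast Q a l) : hasZeroOfMultAtLeast (P * Q) a (k + l) := by
  rw [hasZeroOfMultAtLeast_iff] at *
  rw [map_mul, pow_add]
  exact Ideal.mul_mem_mul hP hQ

theorem hasZeroOfMultAtLeast.mul_right (hP : hasZeroOfMultAtLeast P a k)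
    (Q : MvPolynomial (Fin n) R) : hasZeroOfMultAtLeast (P * Q) a k := by
  rw [hasZeroOfMultAtLeast_iff] at *
  rw [map_mul]
  exact Ideal.mul_mem_right _ _ hP

theorem hasZeroOfMultAtLeast.pow (hP : hasZeroOfMultAtLeast P a k) (m : ℕ) :
    hasZeroOfMultAtLeast (P ^ m) a (m * k) := by
  rw [hasZeroOfMultAtLeast_iff] at *
  rw [map_pow, mul_comm, pow_mul]
  exact Ideal.pow_mem_pow hP m

theorem hasZeroOfMultAtLeast_zero_iff :
    hasZeroOfMultAtLeast P 0 k ↔ P ∈ idealOfVars (Fin n) R ^ k := by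
  rw [hasZeroOfMultAtLeast_iff]
  simp only [Pi.zero_apply, map_zero, add_zero]
  rw [bind₁_X_left, AlgHom.id_apply]

theorem hasZeroOfMultAtLeast_X_pow (i : Fin n) (m : ℕ) :
    hasZeroOfMultAtLeast (X i ^ m : MvPolynomial (Fin n) R) 0 m := by
  rw [hasZeroOfMultAtLeast_zero_iff]
  exact Ideal.pow_mem_pow (Ideal.subset_span (Set.mem_range_self i)) m

theorem not_hasZeroOfMultAtLeast_X_pow_mul (i : Fin n) (m : ℕ) (hQ : constantCoeff Q ≠ 0) :
    ¬ hasZeroOfMultAtLeast (X i ^ m * Q) 0 (m + 1) := by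
  have hcoeff : coeff (Finsupp.single i m) (X i ^ m * Q) = coeff 0 Q := by
    simpa [X_pow_eq_monomial] using coeff_monomial_mul 0 (Finsupp.single i m) 1 Q
  rw [hasZeroOfMultAtLeast_zero_iff, mem_pow_idealOfVars_iff']
  intro h
  exact hQ (hcoeff.symm.trans (h _ (by simp)))

end Multiplicity

section CubePoly

variable {n : ℕ} {R : Type*} [CommRing R] {a : Fin n → R}

theorem hasZeroOfMultAtLeast_X_mul_X_sub_one {i : Fin n} (ha : a i = 0 ∨ a i = 1) :
    hasZeroOfMultAtLeast (X i * (X i - 1)) a 1 := by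
  rw [hasZeroOfMultAtLeast_one_iff]
  rcases ha with h | h <;> simp [h]

theorem hasZeroOfMultAtLeast_prod_X_sub_one {j : Fin n} (ha : a j = 1) :
    hasZeroOfMultAtLeast (∏ i, (X i - 1)) a 1 := by
  rw [hasZeroOfMultAtLeast_one_iff, eval_prod]
  exact Finset.prod_eq_zero (Finset.mem_univ j) (by simp [ha])

/-- The polynomial `P` of the theorem, indexed by `m = k - 1` to avoid truncated subtraction. -/
noncomputable def cubePoly (i₀ : Fin n) (m : ℕ) : MvPolynomial (Fin n) R :=
  X i₀ ^ m * (X i₀ - 1) ^ m * ∏ i, (X i - 1)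

theorem totalDegree_cubePoly [IsDomain R] (i₀ : Fin n) (m : ℕ) :
    (cubePoly i₀ m : MvPolynomial (Fin n) R).totalDegree = 2 * m + n := by
  have hX₁ : ∀ i, (X i - 1 : MvPolynomial (Fin n) R) ≠ 0 := fun i => by
    simpa using X_sub_C_ne_zero i (1 : R)
  have hdeg₁ : ∀ i, (X i - 1 : MvPolynomial (Fin n) R).totalDegree = 1 := fun i => by
    simpa using totalDegree_X_sub_C i (1 : R)
  have hG : (∏ i, (X i - 1) : MvPolynomial (Fin n) R) ≠ 0 :=
    Finset.prod_ne_zero_iff.2 fun i _ => hX₁ i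
  rw [cubePoly, totalDegree_mul_of_isDomain (mul_ne_zero (pow_ne_zero _ (X_ne_zero i₀))
      (pow_ne_zero _ (hX₁ i₀))) hG,
    totalDegree_mul_of_isDomain (pow_ne_zero _ (X_ne_zero i₀)) (pow_ne_zero _ (hX₁ i₀)),
    totalDegree_pow_of_isDomain, totalDegree_pow_of_isDomain, totalDegree_X, hdeg₁,
    totalDegree_prod_of_isDomain _ fun i _ => hX₁ i]
  simp [hdeg₁, two_mul]

theorem hasZeroOfMultAtLeast_cubePoly {i₀ : Fin n} {m : ℕ} (ha : ∀ i, a i = 0 ∨ a i = 1)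
    (ha₀ : a ≠ 0) :
    hasZeroOfMultAtLeast (cubePoly i₀ m) a (m + 1) := by
  obtain ⟨j, hj⟩ : ∃ j, a j = 1 := by
    by_contra! h
    exact ha₀ (funext fun i => (ha i).resolve_right (h i))
  rw [cubePoly, ← mul_pow]
  simpa using ((hasZeroOfMultAtLeast_X_mul_X_sub_one (ha i₀)).pow m).mul
    (hasZeroOfMultAtLeast_prod_X_sub_one hj)

theorem hasZeroOfMultAtLeast_cubePoly_zero (i₀ : Fin n) (m : ℕ) :
    hasZeroOfMultAtLeast (cubePoly i₀ m : MvPolynomial (Fin n) R) 0 m := by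
  rw [cubePoly, mul_assoc]
  exact (hasZeroOfMultAtLeast_X_pow i₀ m).mul_right _

theorem not_hasZeroOfMultAtLeast_cubePoly_zero [Nontrivial R] (i₀ : Fin n) (m : ℕ) :
    ¬ hasZeroOfMultAtLeast (cubePoly i₀ m : MvPolynomial (Fin n) R) 0 (m + 1) := by
  rw [cubePoly, mul_assoc]
  exact not_hasZeroOfMultAtLeast_X_pow_mul i₀ m (by simp [neg_one_pow_ne_zero])

end CubePoly

open MvPolynomial in
theorem explicit_polynomial_properties (k n : ℕ) (hk : 2 ≤ k) (hn : 1 ≤ n) :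
    let P : MvPolynomial (Fin n) ℝ :=
      (X ⟨0, hn⟩) ^ (k - 1) * (X ⟨0, hn⟩ - 1) ^ (k - 1) * ∏ i : Fin n, (X i - 1)
    P.totalDegree = n + 2 * k - 2 ∧
    (∀ a : Fin n → ℝ, (∀ i, a i = 0 ∨ a i = 1) → a ≠ 0 →
      hasZeroOfMultAtLeast P a k) ∧
    hasZeroOfMultAtLeast P (0 : Fin n → ℝ) (k - 1) ∧
    ¬ hasZeroOfMultAtLeast P (0 : Fin n → ℝ) k := by
  obtain ⟨m, rfl⟩ : ∃ m, k = m + 1 := ⟨k - 1, by omega⟩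
  intro P
  have hP : P = cubePoly ⟨0, hn⟩ m := by simp only [P, cubePoly, Nat.add_sub_cancel]
  rw [hP, Nat.add_sub_cancel]
  refine ⟨?_, fun a ha ha₀ => hasZeroOfMultAtLeast_cubePoly ha ha₀,
    hasZeroOfMultAtLeast_cubePoly_zero _ m, not_hasZeroOfMultAtLeast_cubePoly_zero _ m⟩
  rw [totalDegree_cubePoly]
  omega
end

section
/- Let n ≥ 1 and let d_1,...,d_t be positive integers with d_1+...+d_t ≤ n such that exactly one of d_1,...,d_t is odd. Then the symmetric polynomial sum over ordered tuples of distinct indices i_1,...,i_t of x_{i_1}^{d_1}···x_{i_t}^{d_t} is a real linear combination of products p_{m_1}···p_{m_ℓ} of power sums with m_1 + ... + m_ℓ = d_1 + ... + d_t, m_j ∈ {1,...,n}, and exactly one of the m_j odd. -/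
/-!
Peel off the first index of the tuple: summing `x_i ^ d₀` over the indices `i` not among
`i₁, …, i_t` gives `p_{d₀}` minus the terms with `i = i_k`, and the latter merge `d₀` into `d_k`.
This Newton-type recursion writes the sum for `t + 1` exponents through sums for `t` exponents
with the same total degree. As at most one exponent is odd, a merge never adds two odd exponents,
so the number of odd parts is preserved along the induction.
-/

open Finset

section OddCount

variable {ι : Type*} [Fintype ι]

def oddCount (d : ι → ℕ) : ℕ := ∑ j, d j % 2

theorem oddCount_eq_one_iff (d : ι → ℕ) : oddCount d = 1 ↔ ∃! j, Odd (d j) := by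
  classical
  have h (j : ι) : d j % 2 = if Odd (d j) then 1 else 0 := by
    split_ifs with h <;> simp_all [Nat.odd_iff]
  simp only [oddCount, h, ← card_filter, Fintype.existsUnique_iff_card_one]

theorem oddCount_cons {t : ℕ} (a : ℕ) (d : Fin t → ℕ) :
    oddCount (Fin.cons a d : Fin (t + 1) → ℕ) = a % 2 + oddCount d := by
  simp [oddCount, Fin.sum_univ_succ]

theorem oddCount_succ {t : ℕ} (d : Fin (t + 1) → ℕ) :
    oddCount d = d 0 % 2 + oddCount (Fin.tail d) := by
  simp [oddCount, Fin.sum_univ_succ, Fin.tail]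

theorem mod_two_le_oddCount (d : ι → ℕ) (k : ι) : d k % 2 ≤ oddCount d :=
  single_le_sum (f := (d · % 2)) (fun _ _ => Nat.zero_le _) (mem_univ k)

theorem oddCount_update [DecidableEq ι] (d : ι → ℕ) (k : ι) (v : ℕ) :
    oddCount (Function.update d k v) + d k % 2 = oddCount d + v % 2 := by
  have h : ∑ j ∈ {k}ᶜ, Function.update d k v j % 2 = ∑ j ∈ {k}ᶜ, d j % 2 :=
    sum_congr rfl fun j hj => by rw [Function.update_of_ne (by simpa using hj)]
  simp only [oddCount, Fintype.sum_eq_add_sum_compl k, Function.update_self, h]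
  ring

end OddCount

theorem sum_update_add {ι M : Type*} [Fintype ι] [DecidableEq ι] [AddCommMonoid M]
    (f : ι → M) (k : ι) (a : M) :
    ∑ j, Function.update f k (f k + a) j = a + ∑ j, f j := by
  rw [sum_update_of_mem (mem_univ k), ← add_sum_erase _ _ (mem_univ k), erase_eq]
  abel

theorem prod_pow_update_add {ι M : Type*} [Fintype ι] [DecidableEq ι] [CommMonoid M]
    (x : ι → M) (f : ι → ℕ) (k : ι) (a : ℕ) :
    ∏ j, x j ^ Function.update f k (f k + a) j = x k ^ a * ∏ j, x j ^ f j := by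
  have h : ∏ j ∈ {k}ᶜ, x j ^ Function.update f k (f k + a) j = ∏ j ∈ {k}ᶜ, x j ^ f j :=
    prod_congr rfl fun j hj => by rw [Function.update_of_ne (by simpa using hj)]
  simp only [Fintype.prod_eq_mul_prod_compl k, Function.update_self, h, pow_add]
  ac_rfl

theorem sum_compl_range {ι σ M : Type*} [Fintype ι] [Fintype σ] [AddCommGroup M]
    (e : ι ↪ σ) [Fintype {i // i ∉ Set.range e}] (g : σ → M) :
    ∑ i : {i // i ∉ Set.range e}, g i = ∑ i, g i - ∑ k, g (e k) := by
  classical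
  rw [eq_sub_iff_add_eq']
  convert Fintype.sum_subtype_add_sum_subtype (· ∈ Set.range e) g using 2
  · convert Fintype.sum_equiv (Equiv.ofInjective e e.injective) (fun k => g (e k)) (fun i => g i)
      fun _ => rfl
  · congr!

namespace MvPolynomial

variable (σ R : Type*) [Fintype σ] [CommRing R]

def powerSumProducts (s c : ℕ) : Set (MvPolynomial σ R) :=
  {Q | ∃ (L : ℕ) (m : Fin L → ℕ), (∀ j, 1 ≤ m j) ∧ ∑ j, m j = s ∧ oddCount m = c ∧
    Q = ∏ j, psum σ R (m j)}

variable {σ R}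

theorem psum_mul_mem_span {a s c : ℕ} (ha : 1 ≤ a) {x : MvPolynomial σ R}
    (hx : x ∈ Submodule.span R (powerSumProducts σ R s c)) :
    psum σ R a * x ∈ Submodule.span R (powerSumProducts σ R (a + s) (a % 2 + c)) := by
  refine Submodule.span_mono ?_
    (Submodule.apply_mem_span_image_of_mem_span (LinearMap.mulLeft R (psum σ R a)) hx)
  rintro _ ⟨_, ⟨L, m, hm, rfl, rfl, rfl⟩, rfl⟩
  refine ⟨L + 1, Fin.cons a m, Fin.cases ha hm, Fin.sum_cons a m, oddCount_cons a m, ?_⟩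
  simp [Fin.prod_univ_succ]

variable (σ R) [DecidableEq σ]

noncomputable def augmentedMonomial {t : ℕ} (d : Fin t → ℕ) : MvPolynomial σ R :=
  ∑ e : Fin t ↪ σ, ∏ j, X (e j) ^ d j

theorem augmentedMonomial_succ {t : ℕ} (d : Fin (t + 1) → ℕ) :
    augmentedMonomial σ R d = psum σ R (d 0) * augmentedMonomial σ R (Fin.tail d) -
      ∑ k, augmentedMonomial σ R (Function.update (Fin.tail d) k (Fin.tail d k + d 0)) := by
  calc augmentedMonomial σ R d
      = ∑ e : Fin t ↪ σ, (∑ i : {i // i ∉ Set.range e}, X (i : σ) ^ d 0) *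
          ∏ j, X (e j) ^ Fin.tail d j := by
        rw [augmentedMonomial, ← (Equiv.embeddingFinSucc t σ).symm.sum_comp, Fintype.sum_sigma]
        simp [Fin.prod_univ_succ, sum_mul, Fin.tail]
    _ = ∑ e : Fin t ↪ σ, (psum σ R (d 0) - ∑ k, X (e k) ^ d 0) * ∏ j, X (e j) ^ Fin.tail d j := by
        refine sum_congr rfl fun e _ => ?_
        rw [sum_compl_range e (X · ^ d 0)]; rfl
    _ = _ := by
        simp_rw [sub_mul, sum_mul, sum_sub_distrib, augmentedMonomial, mul_sum, prod_pow_update_add]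
        rw [sum_comm]

variable {σ R}

theorem augmentedMonomial_mem_span {t : ℕ} (d : Fin t → ℕ) (hd : ∀ j, 1 ≤ d j)
    (hodd : oddCount d ≤ 1) :
    augmentedMonomial σ R d ∈ Submodule.span R (powerSumProducts σ R (∑ j, d j) (oddCount d)) := by
  induction t with
  | zero =>
    refine Submodule.subset_span ⟨0, Fin.elim0, (Fin.elim0 ·), by simp, by simp [oddCount], ?_⟩
    simp [augmentedMonomial]
  | succ t ih =>
    have hsum : ∑ j, d j = d 0 + ∑ j, Fin.tail d j := Fin.sum_univ_succ d
    have hc := oddCount_succ d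
    rw [augmentedMonomial_succ, hsum, hc]
    refine Submodule.sub_mem _
      (psum_mul_mem_span (hd 0) (ih (Fin.tail d) (fun j => hd j.succ) (by omega)))
      (Submodule.sum_mem _ fun k _ => ?_)
    have hupd := oddCount_update (Fin.tail d) k (Fin.tail d k + d 0)
    have hk := mod_two_le_oddCount (Fin.tail d) k
    set e := Function.update (Fin.tail d) k (Fin.tail d k + d 0)
    have he : ∀ j, 1 ≤ e j := fun j => by
      simp only [e, Function.update_apply]
      split_ifs <;> simp [Fin.tail, hd, le_add_right]
    -- if `d 0` is odd, `hodd` forces `Fin.tail d k` to be even, so the merged entry is odd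
    have hce : oddCount e = d 0 % 2 + oddCount (Fin.tail d) := by omega
    simpa only [e, sum_update_add, hce] using ih e he (by omega)

end MvPolynomial

open MvPolynomial in
theorem symmetric_poly_in_span_power_sums_general (n t : ℕ)
    (d : Fin t → ℕ) (hd : ∀ j, 1 ≤ d j) (hsum : ∑ j, d j ≤ n)
    (hodd : ∃! j, Odd (d j)) :
    (∑ e : Fin t ↪ Fin n, ∏ j, (X (e j) : MvPolynomial (Fin n) ℝ) ^ d j)
      ∈ Submodule.span ℝ {Q : MvPolynomial (Fin n) ℝ |
          ∃ (L : ℕ) (m : Fin L → ℕ),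
            (∀ j, 1 ≤ m j ∧ m j ≤ n) ∧
            (∑ j, m j = ∑ j, d j) ∧
            (∃! j, Odd (m j)) ∧
            Q = ∏ j, ∑ i : Fin n, (X i : MvPolynomial (Fin n) ℝ) ^ m j} := by
  have hc : oddCount d = 1 := (oddCount_eq_one_iff d).2 hodd
  have h := augmentedMonomial_mem_span d hd hc.le (σ := Fin n) (R := ℝ)
  rw [hc] at h
  refine Submodule.span_mono ?_ h
  rintro _ ⟨L, m, hm, hms, hmc, rfl⟩
  have hle : ∀ j, m j ≤ n := fun j =>
    (single_le_sum (fun _ _ => Nat.zero_le _) (mem_univ j)).trans (hms ▸ hsum)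
  exact ⟨L, m, fun j => ⟨hm j, hle j⟩, hms, (oddCount_eq_one_iff m).1 hmc, rfl⟩

open MvPolynomial in
/-- If exactly one of `d₁,…,d_t` is odd, then `∑_{i₁,…,i_t distinct} x_{i₁}^{d₁}⋯x_{i_t}^{d_t}`
is a real linear combination of products `p_{m₁}⋯p_{m_ℓ}` of power sums with
`m₁ + ⋯ + m_ℓ = d₁ + ⋯ + d_t`, each `m_j ∈ {1,…,n}`, and exactly one `m_j` odd. -/
theorem symmetric_poly_in_span_power_sums (n t : ℕ) (hn : 1 ≤ n) (ht : 1 ≤ t)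
    (d : Fin t → ℕ) (hd : ∀ j, 1 ≤ d j) (hsum : ∑ j, d j ≤ n)
    (hodd : ∃! j, Odd (d j)) :
    (∑ e : Fin t ↪ Fin n, ∏ j, (X (e j) : MvPolynomial (Fin n) ℝ) ^ d j)
      ∈ Submodule.span ℝ {Q : MvPolynomial (Fin n) ℝ |
          ∃ (L : ℕ) (m : Fin L → ℕ),
            (∀ j, 1 ≤ m j ∧ m j ≤ n) ∧
            (∑ j, m j = ∑ j, d j) ∧
            (∃! j, Odd (m j)) ∧
            Q = ∏ j, ∑ i : Fin n, (X i : MvPolynomial (Fin n) ℝ) ^ m j} :=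
  symmetric_poly_in_span_power_sums_general n t d hd hsum hodd
end
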